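/- For a, b in (0,1], if x₀, x₁, ..., x_{n-1} is a periodic orbit of f = f_{a,b} (with x_i = f^i(x₀), f^n(x₀) = x₀, n ≥ 1) none of whose points equals 1/2, then the product of the one-sided derivatives ∏_{i=0}^{n-1} f'(x_i) is strictly greater than 1, i.e., the periodic orbit is repelling. -/

import Mathlib

noncomputable def fab (a b x : ℝ) : ℝ :=
  if x ≤ 1/2 then x * (1 + a - a * x) else x * (1 - b + b * x)

noncomputable def fab' (a b x : ℝ) : ℝ :=
  if x < 1/2 then 1 + a - 2 * a * x else 1 - b + 2 * b * x

lemma one_lt_fab' {a b x : ℝ} (ha : 0 < a) (hb : 0 < b) (hx : x ≠ 1/2) :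
    1 < fab' a b x := by
  unfold fab'
  rcases hx.lt_or_gt with hlt | hgt
  · rw [if_pos hlt]
    nlinarith
  · rw [if_neg hgt.not_gt]
    nlinarith

theorem stmt11_general (a b : ℝ) (ha : a ∈ Set.Ioc (0:ℝ) 1) (hb : b ∈ Set.Ioc (0:ℝ) 1)
    (n : ℕ) (hn : 1 ≤ n) (x₀ : ℝ)
    (hne : ∀ i < n, (fab a b)^[i] x₀ ≠ 1/2) :
    1 < ∏ i ∈ Finset.range n, fab' a b ((fab a b)^[i] x₀) := by
  have hfactor : ∀ i ∈ Finset.range n, (1 : ℝ) < fab' a b ((fab a b)^[i] x₀) :=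
    fun i hi => one_lt_fab' ha.1 hb.1 (hne i (Finset.mem_range.mp hi))
  simpa using Finset.prod_lt_prod_of_nonempty (fun _ _ => one_pos) hfactor
    (Finset.nonempty_range_iff.mpr (by omega))

theorem stmt11 (a b : ℝ) (ha : a ∈ Set.Ioc (0:ℝ) 1) (hb : b ∈ Set.Ioc (0:ℝ) 1)
    (n : ℕ) (hn : 1 ≤ n) (x₀ : ℝ) (hx₀ : x₀ ∈ Set.Icc (0:ℝ) 1)
    (hper : (fab a b)^[n] x₀ = x₀)
    (hne : ∀ i < n, (fab a b)^[i] x₀ ≠ 1/2) :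
    1 < ∏ i ∈ Finset.range n, fab' a b ((fab a b)^[i] x₀) :=
  stmt11_general a b ha hb n hn x₀ hne
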